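/- arXiv:2106.04665 — 4 statements merged into one kernel-verified Lean document; each statement's English description precedes it below -/
import Mathlib

section
/- Let R > 0, let f : ℂ → ℂ be continuously differentiable in the real sense with topological support a compact subset of the open ball B(0,R), and let g : ℂ → ℂ be complex-differentiable at every point of B(0,R) \ {0}. Then for every r with 0 < r < R, one has 2i · ∫_{B(0,R) \ closedBall(0,r)} (∂̄f)(z) · g(z) dA(z) = − ∮_{|z|=r} f(z) · g(z) dz, where the circle integral is over the positively oriented circle of radius r centered at 0. -/
open Complex Metric MeasureTheory

open Set Real

set_option maxHeartbeats 1000000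

private lemma wirt_key (L : ℂ →L[ℝ] ℂ) (u : ℂ) :
    I * L u - L (u * I) = (starRingEnd ℂ) u * (I * L 1 - L I) := by
  have h1 : L u = u.re • L 1 + u.im • L I := by
    nth_rw 1 [← Complex.re_add_im u]
    rw [show (u.re : ℂ) + (u.im : ℂ) * I = u.re • (1 : ℂ) + u.im • I by
      simp [Complex.real_smul], map_add, L.map_smul, L.map_smul]
  have h2 : L (u * I) = u.re • L I - u.im • L 1 := by
    nth_rw 1 [← Complex.re_add_im u]
    rw [show ((u.re : ℂ) + (u.im : ℂ) * I) * I = u.re • I - u.im • (1 : ℂ) by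
      simp only [Complex.real_smul]
      linear_combination (u.im : ℂ) * Complex.I_sq,
      map_sub, L.map_smul, L.map_smul]
  rw [h1, h2, show (starRingEnd ℂ) u = (u.re : ℂ) - u.im * I by
    simp [Complex.ext_iff]]
  simp only [Complex.real_smul]
  linear_combination (u.im : ℂ) * (L 1) * Complex.I_sq

private lemma det_mul_right (c : ℂ) :
    (((1 : ℂ →L[ℂ] ℂ).smulRight c).restrictScalars ℝ).det = Complex.normSq c := by
  have h : ((((1 : ℂ →L[ℂ] ℂ).smulRight c).restrictScalars ℝ) : ℂ →ₗ[ℝ] ℂ)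
      = (Algebra.lmul ℝ ℂ) c := by
    apply LinearMap.ext; intro v
    simp [mul_comm]
  rw [ContinuousLinearMap.det, h, ← Algebra.norm_apply, Algebra.norm_complex_apply]



/-- Stokes' theorem for the Wirtinger `∂̄` derivative on an annular region:
if `f` is `C¹` with compact support inside `ball 0 R` and `g` is holomorphic on
`ball 0 R \ {0}`, then for `0 < r < R`,
`2i ∫_{B(0,R) \ closedBall(0,r)} ∂̄f · g = - ∮_{|z|=r} f·g`. -/
theorem stokes_dbar_pairing (R : ℝ) (hR : 0 < R) (f g : ℂ → ℂ)
    (hf : ContDiff ℝ 1 f)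
    (hf_supp : tsupport f ⊆ ball (0 : ℂ) R) (hf_cpt : IsCompact (tsupport f))
    (hg : ∀ z ∈ ball (0 : ℂ) R \ {0}, DifferentiableAt ℂ g z) :
    ∀ r : ℝ, 0 < r → r < R →
      2 * Complex.I *
          ∫ z in (ball (0 : ℂ) R \ closedBall (0 : ℂ) r),
            ((1 / 2) * ((fderiv ℝ f z) 1 + Complex.I * (fderiv ℝ f z) Complex.I)) * g z =
        - ∮ z in C(0, r), f z * g z := by
  intro r hr hrR
  -- choose an intermediate radius ρ
  obtain ⟨ρ, hrρ, hρR, hsupp⟩ : ∃ ρ, r < ρ ∧ ρ < R ∧ tsupport f ⊆ ball (0 : ℂ) ρ := by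
    obtain ⟨ρ', hρ'R, h1⟩ : ∃ ρ' < R, tsupport f ⊆ closedBall 0 ρ' := by
      rcases (tsupport f).eq_empty_or_nonempty with h | h
      · exact ⟨r, hrR, by simp [h]⟩
      · obtain ⟨x0, hx0K, hmax⟩ := hf_cpt.exists_isMaxOn h continuous_norm.continuousOn
        refine ⟨‖x0‖, by simpa [mem_ball_zero_iff] using hf_supp hx0K, fun x hx => ?_⟩
        simpa [mem_closedBall_zero_iff] using hmax hx
    have hm : max ρ' r < R := max_lt hρ'R hrR
    refine ⟨(max ρ' r + R) / 2, by linarith [le_max_right ρ' r], by linarith, fun x hx => ?_⟩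
    have := h1 hx
    rw [mem_closedBall_zero_iff] at this
    rw [mem_ball_zero_iff]
    calc ‖x‖ ≤ ρ' := this
      _ ≤ max ρ' r := le_max_left _ _
      _ < (max ρ' r + R) / 2 := by linarith
  have hρ0 : 0 < ρ := hr.trans hrρ
  set a := Real.log r with ha
  set b := Real.log ρ with hb
  have hea : Real.exp a = r := Real.exp_log hr
  have heb : Real.exp b = ρ := Real.exp_log hρ0
  have hab : a < b := Real.log_lt_log hr hrρ
  have hπ : (0:ℝ) < 2 * π := by positivity
  -- basic objects
  set Ψ : ℂ → ℂ := fun z => g z * (Complex.I * fderiv ℝ f z 1 - fderiv ℝ f z Complex.I)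
    with hΨdef
  set F : ℂ → ℂ := fun z => f z * g z with hFdef
  set Ew : ℂ → (ℂ →L[ℝ] ℂ) :=
    fun w => (((1 : ℂ →L[ℂ] ℂ).smulRight (Complex.exp w)).restrictScalars ℝ) with hEdef
  set LF : ℂ → (ℂ →L[ℝ] ℂ) :=
    fun z => f z • ((fderiv ℂ g z).restrictScalars ℝ) + g z • (fderiv ℝ f z) with hLFdef
  set D : ℂ → (ℂ →L[ℝ] ℂ) :=
    fun w => Complex.exp w • ((LF (Complex.exp w)).comp (Ew w)) + F (Complex.exp w) • Ew w
    with hDdef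
  set G : ℂ → ℂ := fun w => Real.exp (2 * w.re) • Ψ (Complex.exp w) with hGdef
  have hEapp : ∀ w v, Ew w v = v * Complex.exp w := by
    intro w v
    simp [hEdef, smul_eq_mul]
  -- pointwise identity for the ∂̄ integrand
  have hD_eval : ∀ w, Complex.I • D w 1 - D w Complex.I = G w := by
    intro w
    set z := Complex.exp w with hz
    have e1 : D w 1 = z * (LF z z) + F z * z := by
      simp [hDdef, hEapp, smul_eq_mul]
      rfl
    have e2 : D w Complex.I = z * (LF z (z * Complex.I)) + F z * (z * Complex.I) := by
      simp only [hDdef, ContinuousLinearMap.add_apply, ContinuousLinearMap.smul_apply,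
        ContinuousLinearMap.comp_apply, hEapp, smul_eq_mul, ← hz]
      ring_nf
    have e3 : Complex.I • D w 1 - D w Complex.I
        = z * (Complex.I * (LF z z) - LF z (z * Complex.I)) := by
      rw [e1, e2, smul_eq_mul]; ring
    rw [e3, wirt_key (LF z) z]
    have e4 : Complex.I * (LF z 1) - LF z Complex.I = Ψ z := by
      have hgI : (fderiv ℂ g z) Complex.I = Complex.I * (fderiv ℂ g z) 1 := by
        have := (fderiv ℂ g z).map_smul Complex.I (1 : ℂ)
        simpa [smul_eq_mul] using this
      simp only [hLFdef, ContinuousLinearMap.add_apply, ContinuousLinearMap.smul_apply,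
        ContinuousLinearMap.coe_restrictScalars', hgI, smul_eq_mul, hΨdef]
      ring
    rw [e4]
    have e5 : z * ((starRingEnd ℂ) z) = ((Real.exp (2 * w.re) : ℝ) : ℂ) := by
      rw [hz, ← Complex.exp_conj, ← Complex.exp_add, Complex.add_conj, Complex.ofReal_exp]
    calc z * ((starRingEnd ℂ) z * Ψ z) = z * ((starRingEnd ℂ) z) * Ψ z := by ring
      _ = G w := by rw [e5, hGdef]; simp [Complex.real_smul]; rfl
  -- membership facts
  have habsexp : ∀ w : ℂ, ‖Complex.exp w‖ = Real.exp w.re := fun w => by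
    rw [Complex.norm_exp]
  have hmapsC : ∀ w : ℂ, w.re ∈ uIcc a b → Complex.exp w ∈ ball (0:ℂ) R \ {0} := by
    intro w hw
    rw [uIcc_of_le hab.le] at hw
    refine ⟨mem_ball_zero_iff.2 ?_, ?_⟩
    · rw [habsexp]
      calc Real.exp w.re ≤ Real.exp b := Real.exp_le_exp.2 hw.2
        _ = ρ := heb
        _ < R := hρR
    · simp [Complex.exp_ne_zero]
  -- continuity
  have hg_cont : ContinuousOn g (ball (0:ℂ) R \ {0}) := fun z hz =>
    (hg z hz).continuousAt.continuousWithinAt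
  have hcontΨ : ContinuousOn Ψ (ball (0:ℂ) R \ {0}) := by
    have hf' : Continuous (fderiv ℝ f) := hf.continuous_fderiv one_ne_zero
    have h1 : Continuous fun z => (fderiv ℝ f z) 1 :=
      (ContinuousLinearMap.apply ℝ ℂ (1:ℂ)).continuous.comp hf'
    have hI : Continuous fun z => (fderiv ℝ f z) Complex.I :=
      (ContinuousLinearMap.apply ℝ ℂ (Complex.I)).continuous.comp hf'
    exact hg_cont.mul ((continuous_const.mul h1).sub hI).continuousOn
  have hmapsrect : Set.MapsTo Complex.exp (uIcc a b ×ℂ uIcc 0 (2*π)) (ball (0:ℂ) R \ {0}) :=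
    fun w hw => hmapsC w hw.1
  have hcontG : ContinuousOn G (uIcc a b ×ℂ uIcc 0 (2*π)) := by
    have h1 : ContinuousOn (fun w : ℂ => Real.exp (2 * w.re)) (uIcc a b ×ℂ uIcc 0 (2*π)) :=
      (Real.continuous_exp.comp (continuous_const.mul Complex.continuous_re)).continuousOn
    exact h1.smul (hcontΨ.comp Complex.continuous_exp.continuousOn hmapsrect)
  have hcontH : ContinuousOn (fun w => Complex.exp w * F (Complex.exp w))
      (uIcc a b ×ℂ uIcc 0 (2*π)) := by
    have hcontF : ContinuousOn F (ball (0:ℂ) R \ {0}) :=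
      (hf.continuous.continuousOn).mul hg_cont
    exact Complex.continuous_exp.continuousOn.mul
      (hcontF.comp Complex.continuous_exp.continuousOn hmapsrect)
  -- rectangle theorem
  have hrect_cpt : IsCompact (uIcc a b ×ℂ uIcc 0 (2*π)) := by
    rw [show (uIcc a b ×ℂ uIcc 0 (2*π))
        = Complex.equivRealProdCLM.toHomeomorph ⁻¹' (uIcc a b ×ˢ uIcc 0 (2*π)) from rfl]
    exact (Homeomorph.isCompact_preimage _).mpr (isCompact_uIcc.prod isCompact_uIcc)
  have rect : - (∮ z in C(0, r), F z)
      = ∫ x in a..b, ∫ y in (0:ℝ)..(2*π), G (x + y * Complex.I) := by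
    have Hd : ∀ x ∈ Ioo (min ((⟨a,0⟩:ℂ)).re ((⟨b,2*π⟩:ℂ)).re)
          (max ((⟨a,0⟩:ℂ)).re ((⟨b,2*π⟩:ℂ)).re) ×ℂ
          Ioo (min ((⟨a,0⟩:ℂ)).im ((⟨b,2*π⟩:ℂ)).im)
          (max ((⟨a,0⟩:ℂ)).im ((⟨b,2*π⟩:ℂ)).im) \ (∅ : Set ℂ),
        HasFDerivAt (fun w => Complex.exp w * F (Complex.exp w)) (D x) x := by
      rintro w ⟨hw, -⟩
      have hre : w.re ∈ Ioo a b := by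
        have := hw.1
        simpa [min_eq_left hab.le, max_eq_right hab.le] using this
      have hz : Complex.exp w ∈ ball (0:ℂ) R \ {0} :=
        hmapsC w (by rw [uIcc_of_le hab.le]; exact Ioo_subset_Icc_self hre)
      have h1 : HasFDerivAt Complex.exp (Ew w) w :=
        (Complex.hasDerivAt_exp w).hasFDerivAt.restrictScalars ℝ
      have hFd : HasFDerivAt F (LF (Complex.exp w)) (Complex.exp w) := by
        have hfd : HasFDerivAt f (fderiv ℝ f (Complex.exp w)) (Complex.exp w) :=
          (hf.differentiable one_ne_zero (Complex.exp w)).hasFDerivAt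
        have hgd : HasFDerivAt g ((fderiv ℂ g (Complex.exp w)).restrictScalars ℝ)
            (Complex.exp w) := ((hg _ hz).hasFDerivAt).restrictScalars ℝ
        exact hfd.mul hgd
      exact h1.mul (hFd.comp w h1)
    have Hi : IntegrableOn (fun w => Complex.I • D w 1 - D w Complex.I)
        (uIcc ((⟨a,0⟩:ℂ)).re ((⟨b,2*π⟩:ℂ)).re ×ℂ uIcc ((⟨a,0⟩:ℂ)).im ((⟨b,2*π⟩:ℂ)).im) := by
      have : (fun w => Complex.I • D w 1 - D w Complex.I) = G := funext hD_eval
      rw [this]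
      exact hcontG.integrableOn_compact hrect_cpt
    have key := Complex.integral_boundary_rect_of_hasFDerivAt_real_off_countable
      (fun w => Complex.exp w * F (Complex.exp w)) D ⟨a,0⟩ ⟨b,2*π⟩ ∅ countable_empty
      hcontH Hd Hi
    simp only [show ((⟨a,0⟩:ℂ)).re = a from rfl, show ((⟨a,0⟩:ℂ)).im = 0 from rfl,
      show ((⟨b,2*π⟩:ℂ)).re = b from rfl, show ((⟨b,2*π⟩:ℂ)).im = 2*π from rfl,
      Complex.ofReal_zero, zero_mul, add_zero, hD_eval] at key
    have h12 : (∫ x in a..b, Complex.exp ((x:ℂ) + ((2*π:ℝ):ℂ)*Complex.I)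
          * F (Complex.exp ((x:ℂ) + ((2*π:ℝ):ℂ)*Complex.I)))
        = ∫ x in a..b, Complex.exp (x:ℂ) * F (Complex.exp (x:ℂ)) := by
      refine intervalIntegral.integral_congr fun x _ => ?_
      have hexp : Complex.exp ((x:ℂ) + ((2*π:ℝ):ℂ)*Complex.I) = Complex.exp (x:ℂ) := by
        rw [show ((2*π:ℝ):ℂ) * Complex.I = 2*(π:ℂ)*Complex.I by push_cast; ring]
        exact Complex.exp_periodic (x:ℂ)
      rw [hexp]
    have h3 : (∫ y in (0:ℝ)..2*π, Complex.exp ((b:ℂ) + (y:ℂ)*Complex.I)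
          * F (Complex.exp ((b:ℂ) + (y:ℂ)*Complex.I))) = 0 := by
      have hzero : ∀ y : ℝ, F (Complex.exp ((b:ℂ) + (y:ℂ)*Complex.I)) = 0 := by
        intro y
        have hf0 : f (Complex.exp ((b:ℂ) + (y:ℂ)*Complex.I)) = 0 := by
          apply image_eq_zero_of_notMem_tsupport
          intro hmem
          have h5 := hsupp hmem
          rw [mem_ball_zero_iff, habsexp] at h5
          simp only [Complex.add_re, Complex.ofReal_re, Complex.mul_re, Complex.I_re,
            Complex.ofReal_im, Complex.I_im, mul_zero, zero_mul, mul_one, sub_zero,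
            zero_sub, add_zero] at h5
          rw [heb] at h5
          exact absurd h5 (lt_irrefl ρ)
        simp [hFdef, hf0]
      have : (fun y : ℝ => Complex.exp ((b:ℂ) + (y:ℂ)*Complex.I)
          * F (Complex.exp ((b:ℂ) + (y:ℂ)*Complex.I))) = fun _ => 0 :=
        funext fun y => by rw [hzero y, mul_zero]
      rw [this, intervalIntegral.integral_zero]
    have h4 : Complex.I • (∫ y in (0:ℝ)..2*π, Complex.exp ((a:ℂ) + (y:ℂ)*Complex.I)
          * F (Complex.exp ((a:ℂ) + (y:ℂ)*Complex.I))) = ∮ z in C(0, r), F z := by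
      simp only [circleIntegral, deriv_circleMap]
      rw [← intervalIntegral.integral_smul]
      refine intervalIntegral.integral_congr fun y _ => ?_
      have hc : circleMap 0 r y = (r:ℂ) * Complex.exp ((y:ℂ)*Complex.I) := by
        simp [circleMap]
      have hexp : Complex.exp ((a:ℂ) + (y:ℂ)*Complex.I)
          = (r:ℂ) * Complex.exp ((y:ℂ)*Complex.I) := by
        rw [Complex.exp_add, ← Complex.ofReal_exp, hea]
      rw [hexp, hc, smul_eq_mul, smul_eq_mul]
      ring
    rw [h12, sub_self, h3, smul_zero, zero_add, zero_sub, h4] at key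
    exact key
  -- iterated integral = set integral over the open rectangle
  set s : Set ℂ := Ioo a b ×ℂ Ioo 0 (2*π) with hsdef
  have hs_meas : MeasurableSet s :=
    (Complex.measurable_re measurableSet_Ioo).inter (Complex.measurable_im measurableSet_Ioo)
  have iter_eq : (∫ x in a..b, ∫ y in (0:ℝ)..(2*π), G (x + y * Complex.I))
      = ∫ w in s, G w := by
    have hGprod_int : IntegrableOn (fun p : ℝ × ℝ => G ((p.1:ℂ) + (p.2:ℂ) * Complex.I))
        (Ioo a b ×ˢ Ioo 0 (2*π)) := by
      have hcont2 : ContinuousOn (fun p : ℝ × ℝ => G ((p.1:ℂ) + (p.2:ℂ) * Complex.I))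
          (Icc a b ×ˢ Icc 0 (2*π)) := by
        refine hcontG.comp ?_ ?_
        · exact ((Complex.continuous_ofReal.comp continuous_fst).add
            ((Complex.continuous_ofReal.comp continuous_snd).mul continuous_const)).continuousOn
        · intro p hp
          constructor
          · simpa [uIcc_of_le hab.le] using hp.1
          · simpa [uIcc_of_le hπ.le] using hp.2
      exact (hcont2.integrableOn_compact (isCompact_Icc.prod isCompact_Icc)).mono_set
        (prod_mono Ioo_subset_Icc_self Ioo_subset_Icc_self)
    have inner : ∀ x : ℝ, (∫ y in (0:ℝ)..(2*π), G (x + y * Complex.I))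
        = ∫ y in Ioo (0:ℝ) (2*π), G (x + y * Complex.I) := fun x => by
      rw [intervalIntegral.integral_of_le hπ.le, integral_Ioc_eq_integral_Ioo]
    calc (∫ x in a..b, ∫ y in (0:ℝ)..(2*π), G (x + y * Complex.I))
        = ∫ x in Ioo a b, ∫ y in Ioo (0:ℝ) (2*π), G (x + y * Complex.I) := by
          simp only [inner]
          rw [intervalIntegral.integral_of_le hab.le, integral_Ioc_eq_integral_Ioo]
      _ = ∫ p in Ioo a b ×ˢ Ioo (0:ℝ) (2*π), G ((p.1:ℂ) + (p.2:ℂ) * Complex.I) :=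
          (setIntegral_prod _ hGprod_int).symm
      _ = ∫ w in s, G w := by
          have hpre : Complex.measurableEquivRealProd.symm ⁻¹' s
              = Ioo a b ×ˢ Ioo (0:ℝ) (2*π) := by
            ext p
            simp only [mem_preimage, Complex.measurableEquivRealProd_symm_apply, hsdef,
              Complex.mem_reProdIm, mem_prod]
          have := (Complex.volume_preserving_equiv_real_prod.symm).setIntegral_preimage_emb
            (Complex.measurableEquivRealProd.symm.measurableEmbedding) G s
          rw [hpre] at this
          rw [← this]
          refine setIntegral_congr_fun (measurableSet_Ioo.prod measurableSet_Ioo) fun p _ => ?_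
          rw [Complex.measurableEquivRealProd_symm_apply, Complex.mk_eq_add_mul_I]
  -- change of variables
  have cov : (∫ w in s, G w) = ∫ z in Complex.exp '' s, Ψ z := by
    have hder : ∀ w ∈ s, HasFDerivWithinAt Complex.exp (Ew w) s w := fun w _ =>
      ((Complex.hasDerivAt_exp w).hasFDerivAt.restrictScalars ℝ).hasFDerivWithinAt
    have hinj : InjOn Complex.exp s := by
      intro x hx y hy hxy
      rw [Complex.exp_eq_exp_iff_exists_int] at hxy
      obtain ⟨n, hn⟩ := hxy
      have him : x.im = y.im + (n:ℝ) * (2*π) := by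
        have := congrArg Complex.im hn
        simpa using this
      have hx2 : x.im ∈ Ioo (0:ℝ) (2*π) := hx.2
      have hy2 : y.im ∈ Ioo (0:ℝ) (2*π) := hy.2
      have hn0 : n = 0 := by
        have h1 : (n:ℝ) * (2*π) < 1 * (2*π) := by
          have := hx2.2; have := hy2.1; nlinarith
        have h2 : (-1 : ℝ) * (2*π) < (n:ℝ) * (2*π) := by
          have := hx2.1; have := hy2.2; nlinarith
        have hn1 : (n:ℝ) < 1 := lt_of_mul_lt_mul_right h1 hπ.le
        have hn2 : (-1:ℝ) < (n:ℝ) := lt_of_mul_lt_mul_right h2 hπ.le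
        have : n < 1 := by exact_mod_cast hn1
        have : (-1:ℤ) < n := by exact_mod_cast hn2
        omega
      rw [hn0] at hn
      simpa using hn
    have hcov := integral_image_eq_integral_abs_det_fderiv_smul volume hs_meas hder hinj Ψ
    rw [hcov]
    refine setIntegral_congr_fun hs_meas fun w _ => ?_
    have hdet : |(Ew w).det| = Real.exp (2*w.re) := by
      rw [hEdef]
      dsimp only
      rw [det_mul_right]
      rw [_root_.abs_of_nonneg (Complex.normSq_nonneg _), ← Complex.sq_norm,
        Complex.norm_exp, sq, ← Real.exp_add, two_mul]
    rw [hdet, hGdef]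
  -- image of the rectangle is a.e. the annulus
  have himg : (∫ z in Complex.exp '' s, Ψ z)
      = ∫ z in ball (0:ℂ) ρ \ closedBall (0:ℂ) r, Ψ z := by
    have hsub : Complex.exp '' s ⊆ ball (0:ℂ) ρ \ closedBall (0:ℂ) r := by
      rintro z ⟨w, hw, rfl⟩
      have hre : w.re ∈ Ioo a b := hw.1
      constructor
      · rw [mem_ball_zero_iff, habsexp, ← heb]
        exact Real.exp_lt_exp.2 hre.2
      · rw [mem_closedBall_zero_iff, habsexp, ← hea, not_le]
        exact Real.exp_lt_exp.2 hre.1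
    have hnull : volume {z : ℂ | z.im = 0} = 0 := by
      have hpre : {z : ℂ | z.im = 0}
          = Complex.measurableEquivRealProd ⁻¹' ((univ : Set ℝ) ×ˢ ({0} : Set ℝ)) := by
        ext z
        rw [mem_preimage, show Complex.measurableEquivRealProd z = (z.re, z.im) from rfl]
        simp [eq_comm]
      rw [hpre, Complex.volume_preserving_equiv_real_prod.measure_preimage
        (MeasurableSet.univ.prod (measurableSet_singleton 0)).nullMeasurableSet]
      rw [Measure.volume_eq_prod, Measure.prod_prod]
      simp
    have hdiff : (ball (0:ℂ) ρ \ closedBall (0:ℂ) r) \ Complex.exp '' s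
        ⊆ {z : ℂ | z.im = 0} := by
      rintro z ⟨⟨hz1, hz2⟩, hznot⟩
      by_contra him
      apply hznot
      simp only [mem_setOf_eq] at him
      have hz0 : z ≠ 0 := fun h => him (by simp [h])
      have habs0 : 0 < ‖z‖ := norm_pos_iff.mpr hz0
      rw [mem_ball_zero_iff] at hz1
      rw [mem_closedBall_zero_iff, not_le] at hz2
      have hθ := Complex.arg_mem_Ioc z
      have hθ0 : Complex.arg z ≠ 0 := fun h => him ((Complex.arg_eq_zero_iff.1 h).2)
      set y : ℝ := if 0 < Complex.arg z then Complex.arg z else Complex.arg z + 2*π with hy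
      have hyIoo : y ∈ Ioo (0:ℝ) (2*π) := by
        rcases lt_or_ge 0 (Complex.arg z) with h | h
        · rw [hy, if_pos h]
          exact ⟨h, by linarith [hθ.2, Real.pi_pos]⟩
        · rw [hy, if_neg (not_lt.2 h)]
          have hlt : Complex.arg z < 0 := lt_of_le_of_ne h hθ0
          constructor
          · linarith [hθ.1, Real.pi_pos]
          · linarith [Real.pi_pos]
      have hexpy : Complex.exp ((y:ℂ) * Complex.I)
          = Complex.exp ((Complex.arg z : ℂ) * Complex.I) := by
        rcases lt_or_ge 0 (Complex.arg z) with h | h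
        · rw [hy, if_pos h]
        · rw [hy, if_neg (not_lt.2 h)]
          push_cast
          rw [add_mul]
          rw [show (2*(π:ℂ))*Complex.I = 2*(π:ℂ)*Complex.I from rfl]
          exact Complex.exp_periodic _
      refine ⟨(Real.log ‖z‖ : ℂ) + (y:ℂ) * Complex.I, ⟨?_, ?_⟩, ?_⟩
      · show ((Real.log ‖z‖ : ℂ) + (y:ℂ) * Complex.I).re ∈ Ioo a b
        simp only [Complex.add_re, Complex.ofReal_re, Complex.mul_re, Complex.I_re,
          Complex.ofReal_im, Complex.I_im, mul_zero, zero_mul, mul_one, sub_zero,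
          zero_sub, add_zero, neg_zero]
        exact ⟨Real.log_lt_log hr hz2, Real.log_lt_log habs0 hz1⟩
      · show ((Real.log ‖z‖ : ℂ) + (y:ℂ) * Complex.I).im ∈ Ioo (0:ℝ) (2*π)
        simp only [Complex.add_im, Complex.ofReal_im, Complex.mul_im, Complex.I_im,
          Complex.I_re, Complex.ofReal_re, mul_one, mul_zero, add_zero, zero_add]
        exact hyIoo
      · rw [Complex.exp_add, hexpy, ← Complex.ofReal_exp, Real.exp_log habs0]
        exact Complex.norm_mul_exp_arg_mul_I z
    refine setIntegral_congr_set ?_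
    rw [MeasureTheory.ae_eq_set]
    constructor
    · rw [diff_eq_empty.2 hsub]
      exact measure_empty
    · exact measure_mono_null hdiff hnull
  -- extend the annulus to the big one
  have hbig : (∫ z in ball (0:ℂ) R \ closedBall (0:ℂ) r, Ψ z)
      = ∫ z in ball (0:ℂ) ρ \ closedBall (0:ℂ) r, Ψ z := by
    have hset : ball (0:ℂ) R \ closedBall (0:ℂ) r
        = (ball (0:ℂ) ρ \ closedBall (0:ℂ) r) ∪ (ball (0:ℂ) R \ ball (0:ℂ) ρ) := by
      ext z
      simp only [mem_union, mem_diff, mem_ball_zero_iff, mem_closedBall_zero_iff,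
        not_le, not_lt]
      constructor
      · rintro ⟨h1, h2⟩
        rcases lt_or_ge ‖z‖ ρ with h | h
        · exact Or.inl ⟨h, h2⟩
        · exact Or.inr ⟨h1, h⟩
      · rintro (⟨h1, h2⟩ | ⟨h1, h2⟩)
        · exact ⟨h1.trans hρR, h2⟩
        · exact ⟨h1, hrρ.trans_le h2⟩
    have hΨ0 : EqOn Ψ 0 (ball (0:ℂ) R \ ball (0:ℂ) ρ) := by
      intro z hz
      have hznot : z ∉ tsupport f := by
        intro hmem
        exact hz.2 (hsupp hmem)
      have hfd0 : fderiv ℝ f z = 0 := by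
        by_contra h
        exact hznot (support_fderiv_subset ℝ (Function.mem_support.2 h))
      simp [hΨdef, hfd0]
    have hmeasD : MeasurableSet (ball (0:ℂ) R \ ball (0:ℂ) ρ) :=
      measurableSet_ball.diff measurableSet_ball
    have hintA : IntegrableOn Ψ (ball (0:ℂ) ρ \ closedBall (0:ℂ) r) := by
      have hK : IsCompact (closedBall (0:ℂ) ρ \ ball (0:ℂ) r) :=
        (isCompact_closedBall (0:ℂ) ρ).diff isOpen_ball
      have hKsub : closedBall (0:ℂ) ρ \ ball (0:ℂ) r ⊆ ball (0:ℂ) R \ {0} := by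
        rintro z ⟨h1, h2⟩
        rw [mem_closedBall_zero_iff] at h1
        rw [mem_ball_zero_iff, not_lt] at h2
        refine ⟨mem_ball_zero_iff.2 (lt_of_le_of_lt h1 hρR), ?_⟩
        simp only [mem_singleton_iff]
        intro h
        rw [h, norm_zero] at h2
        exact absurd h2 (not_le.2 hr)
      exact ((hcontΨ.mono hKsub).integrableOn_compact hK).mono_set
        (diff_subset_diff ball_subset_closedBall ball_subset_closedBall)
    have hintD : IntegrableOn Ψ (ball (0:ℂ) R \ ball (0:ℂ) ρ) :=
      (integrableOn_congr_fun hΨ0 hmeasD).2 (integrableOn_zero)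
    have hdisj : Disjoint (ball (0:ℂ) ρ \ closedBall (0:ℂ) r) (ball (0:ℂ) R \ ball (0:ℂ) ρ) := by
      rw [Set.disjoint_left]
      rintro z ⟨h1, -⟩ ⟨-, h2⟩
      exact h2 h1
    rw [hset, setIntegral_union hdisj hmeasD hintA hintD,
      setIntegral_congr_fun hmeasD hΨ0]
    simp
  -- head of the goal
  have hhead : 2 * Complex.I *
      ∫ z in (ball (0 : ℂ) R \ closedBall (0 : ℂ) r),
            ((1 / 2) * ((fderiv ℝ f z) 1 + Complex.I * (fderiv ℝ f z) Complex.I)) * g z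
      = ∫ z in ball (0:ℂ) R \ closedBall (0:ℂ) r, Ψ z := by
    rw [← integral_const_mul]
    refine integral_congr_ae (Filter.Eventually.of_forall fun z => ?_)
    simp only [hΨdef]
    linear_combination ((fderiv ℝ f z) Complex.I * g z) * Complex.I_sq
  rw [hhead, hbig, ← himg, ← cov, ← iter_eq, ← rect]
end

section
/- Let R > 0 and let g, h : ℂ → ℂ be complex-differentiable on the open ball B(0,R) with g(0) = 0, and let k be a natural number. Then the positively oriented circle integrals ∮_{|z|=r} conj(g(z)) · h(z) / z^k dz tend to 0 as r tends to 0 from the right. -/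
/-!
On the circle `|z| = r` one has `conj z = r² / z`, so `conj (g z) = G (r² / z)` with
`G = conj ∘ g ∘ conj` holomorphic. The integrand `G (r² / z) * h z / z ^ k` is then holomorphic on
the annulus `r ≤ |z| ≤ s`, so the integral over `|z| = r` equals the one over a fixed circle
`|z| = s`. There `r² / z → 0` uniformly as `r → 0`, hence `G (r² / z) → G 0 = 0` uniformly.
-/

open Complex ComplexConjugate Metric Filter Set Topology

lemma conj_eq_sq_div_of_mem_sphere {r : ℝ} {z : ℂ} (hz : z ∈ sphere (0 : ℂ) r) :
    conj z = (r : ℂ) ^ 2 / z := by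
  rcases eq_or_ne z 0 with rfl | hz0
  · simp
  rw [eq_div_iff hz0, mul_comm, mul_conj', mem_sphere_zero_iff_norm.1 hz]

lemma mapsTo_sq_div_compl_ball {r : ℝ} (hr : 0 < r) :
    MapsTo (fun z : ℂ => (r : ℂ) ^ 2 / z) (ball 0 r)ᶜ (closedBall 0 r) := by
  intro z hz
  have hz' : r ≤ ‖z‖ := by simpa using hz
  have : r ^ 2 / ‖z‖ ≤ r := by
    rw [div_le_iff₀ (hr.trans_le hz')]; nlinarith
  simpa [norm_div, abs_of_pos hr] using this

lemma mapsTo_sq_div_compl_closedBall {r : ℝ} (hr : 0 < r) :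
    MapsTo (fun z : ℂ => (r : ℂ) ^ 2 / z) (closedBall 0 r)ᶜ (ball 0 r) := by
  intro z hz
  have hz' : r < ‖z‖ := by simpa using hz
  have : r ^ 2 / ‖z‖ < r := by
    rw [div_lt_iff₀ (hr.trans hz')]; nlinarith
  simpa [norm_div, abs_of_pos hr] using this

lemma DifferentiableOn.conj_conj {f : ℂ → ℂ} {s : Set ℂ} (hf : DifferentiableOn ℂ f s)
    (hs : IsOpen s) : DifferentiableOn ℂ (conj ∘ f ∘ conj) (conj ⁻¹' s) := fun _ hz =>
  (differentiableAt_conj_conj_iff.2 (hf.differentiableAt (hs.mem_nhds hz))).differentiableWithinAt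

lemma circleIntegral_conj_mul_eq (g H : ℂ → ℂ) {r : ℝ} (hr : 0 ≤ r) :
    (∮ z in C(0, r), conj (g z) * H z) =
      ∮ z in C(0, r), (conj ∘ g ∘ conj) ((r : ℂ) ^ 2 / z) * H z :=
  circleIntegral.integral_congr hr fun z hz => by
    simp [← conj_eq_sq_div_of_mem_sphere hz]

lemma circleIntegral_comp_sq_div_mul_eq {G H : ℂ → ℂ} {r s : ℝ} (hr : 0 < r) (hrs : r ≤ s)
    (hG : DifferentiableOn ℂ G (closedBall 0 r))
    (hH : DifferentiableOn ℂ H (closedBall 0 s \ ball 0 r)) :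
    (∮ z in C(0, s), G ((r : ℂ) ^ 2 / z) * H z) = ∮ z in C(0, r), G ((r : ℂ) ^ 2 / z) * H z := by
  have hne : ∀ z ∈ (ball (0 : ℂ) r)ᶜ, z ≠ 0 := fun z hz h0 => hz (h0 ▸ mem_ball_self hr)
  refine Complex.circleIntegral_eq_of_differentiable_on_annulus_off_countable hr hrs
    countable_empty ?_ ?_
  · refine ContinuousOn.mul ?_ hH.continuousOn
    exact hG.continuousOn.comp (continuousOn_const.div continuousOn_id fun z hz => hne z hz.2)
      ((mapsTo_sq_div_compl_ball hr).mono_left fun _ hz => hz.2)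
  · rintro z ⟨⟨hzs, hzr⟩, -⟩
    have hz0 : z ≠ 0 := hne z fun h => hzr (ball_subset_closedBall h)
    have hGz : DifferentiableAt ℂ G ((r : ℂ) ^ 2 / z) :=
      hG.differentiableAt (closedBall_mem_nhds_of_mem (mapsTo_sq_div_compl_closedBall hr hzr))
    have hHz : DifferentiableAt ℂ H z := hH.differentiableAt <|
      inter_mem (closedBall_mem_nhds_of_mem hzs) <|
        mem_of_superset (isClosed_closedBall.isOpen_compl.mem_nhds hzr)
          (compl_subset_compl.2 ball_subset_closedBall)
    exact (hGz.comp z ((differentiableAt_const _).div differentiableAt_id hz0)).mul hHz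

lemma tendstoUniformlyOn_comp_sq_div_mul {G H : ℂ → ℂ} {s : ℝ} (hG : ContinuousAt G 0)
    (hG0 : G 0 = 0) (hH : ContinuousOn H (sphere 0 s)) :
    TendstoUniformlyOn (fun (r : ℝ) z => G ((r : ℂ) ^ 2 / z) * H z) 0 (𝓝 0) (sphere 0 s) := by
  have hS : ∀ᶠ q : ℝ × ℂ in 𝓝 0 ×ˢ 𝓟 (sphere 0 s), q.2 ∈ sphere 0 s :=
    tendsto_principal.1 tendsto_snd
  obtain ⟨M, hM⟩ := (isCompact_sphere (0 : ℂ) s).exists_bound_of_continuousOn hH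
  have hsq : Tendsto (fun q : ℝ × ℂ => (q.1 : ℂ) ^ 2 / q.2) (𝓝 0 ×ˢ 𝓟 (sphere 0 s)) (𝓝 0) := by
    simp_rw [div_eq_mul_inv]
    refine Tendsto.zero_mul_isBoundedUnder_le ?_ <| isBoundedUnder_of_eventually_le (a := s⁻¹) <|
      hS.mono fun q hq => by simp [mem_sphere_zero_iff_norm.1 hq]
    have : Tendsto (fun x : ℝ => (x : ℂ) ^ 2) (𝓝 0) (𝓝 0) :=
      Continuous.tendsto' (by fun_prop) 0 0 (by simp)
    exact this.comp tendsto_fst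
  have hprod := (hG0 ▸ hG.tendsto).comp hsq |>.zero_mul_isBoundedUnder_le
    (isBoundedUnder_of_eventually_le (hS.mono fun q hq => hM _ hq))
  rw [nhds_eq_comap_uniformity (x := (0 : ℂ)), tendsto_comap_iff] at hprod
  exact tendstoUniformlyOn_iff_tendsto.2 hprod

lemma tendsto_circleIntegral_comp_sq_div_mul {G H : ℂ → ℂ} {s ρ : ℝ} (hs : 0 < s) (hρ : 0 < ρ)
    (hG : ContinuousOn G (ball 0 ρ)) (hG0 : G 0 = 0) (hH : ContinuousOn H (sphere 0 s)) :
    Tendsto (fun r : ℝ => ∮ z in C(0, s), G ((r : ℂ) ^ 2 / z) * H z) (𝓝 0) (𝓝 0) := by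
  have hsmall : ∀ᶠ r : ℝ in 𝓝 0, r ^ 2 / s < ρ := by
    have : Tendsto (fun r : ℝ => r ^ 2 / s) (𝓝 0) (𝓝 0) := by
      simpa using ((continuous_pow 2).div_const s).tendsto 0
    exact this.eventually_lt_const hρ
  have hcont : ∀ᶠ r : ℝ in 𝓝 0, ContinuousOn (fun z => G ((r : ℂ) ^ 2 / z) * H z) (sphere 0 s) := by
    filter_upwards [hsmall] with r hr
    refine ContinuousOn.mul (hG.comp (continuousOn_const.div continuousOn_id
      fun z hz => ne_zero_of_mem_sphere hs.ne' ⟨z, hz⟩) fun z hz => ?_) hH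
    simpa [norm_div, mem_sphere_zero_iff_norm.1 hz] using hr
  have hunif := tendstoUniformlyOn_comp_sq_div_mul (hG.continuousAt (ball_mem_nhds 0 hρ)) hG0 hH
  simpa [circleIntegral] using hunif.tendsto_circleIntegral_of_continuousOn hs.le hcont

/-- The circle integrals `∮_{|z|=r} conj (g z) * h z / z^k dz` tend to `0` as `r → 0⁺`,
for `g, h` holomorphic on `ball 0 R` with `g 0 = 0`. -/
theorem circleIntegral_conj_div_pow_tendsto_zero (R : ℝ) (hR : 0 < R) (g h : ℂ → ℂ)
    (hg : DifferentiableOn ℂ g (ball (0 : ℂ) R))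
    (hh : DifferentiableOn ℂ h (ball (0 : ℂ) R))
    (hg0 : g 0 = 0) (k : ℕ) :
    Tendsto (fun r : ℝ => ∮ z in C(0, r), (starRingEnd ℂ) (g z) * h z / z ^ k)
      (nhdsWithin 0 (Set.Ioi 0)) (nhds 0) := by
  set G : ℂ → ℂ := conj ∘ g ∘ conj
  have hG : DifferentiableOn ℂ G (ball 0 R) := by
    have hball : conj ⁻¹' ball (0 : ℂ) R = ball 0 R := by ext; simp
    exact hball ▸ hg.conj_conj isOpen_ball
  have hG0 : G 0 = 0 := by simp [G, hg0]
  set H : ℂ → ℂ := fun z => h z / z ^ k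
  have hH : DifferentiableOn ℂ H (ball 0 R \ {0}) :=
    (hh.mono sdiff_subset).div (differentiableOn_pow k) fun z hz => pow_ne_zero k hz.2
  obtain ⟨s, hs0, hsR⟩ := exists_between hR
  have hmove : ∀ r ∈ Ioo 0 s, (∮ z in C(0, s), G ((r : ℂ) ^ 2 / z) * H z) =
      ∮ z in C(0, r), conj (g z) * h z / z ^ k := by
    rintro r ⟨hr0, hrs⟩
    simp_rw [mul_div_assoc]
    rw [circleIntegral_conj_mul_eq g _ hr0.le, circleIntegral_comp_sq_div_mul_eq hr0 hrs.le
      (hG.mono (closedBall_subset_ball (hrs.trans hsR)))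
      (hH.mono (sdiff_subset_sdiff (closedBall_subset_ball hsR)
        (singleton_subset_iff.2 (mem_ball_self hr0))))]
  have hlim := tendsto_circleIntegral_comp_sq_div_mul hs0 hR hG.continuousOn hG0
    (hH.continuousOn.mono fun z hz =>
      ⟨sphere_subset_closedBall.trans (closedBall_subset_ball hsR) hz,
        ne_zero_of_mem_sphere hs0.ne' ⟨z, hz⟩⟩)
  exact (hlim.mono_left nhdsWithin_le_nhds).congr' (eventually_of_mem (Ioo_mem_nhdsGT hs0) hmove)
end

section
/- Let a > 0, let f : ℂ → ℂ be complex-differentiable on the open ball B(0,a), and assume that z ↦ ‖f(z)‖² is integrable on B(0,a). Then for every z with ‖z‖ < a, one has ‖f(z)‖ ≤ (√π · (a − ‖z‖))⁻¹ · ‖f‖_{L²(B_a)}. -/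
open Complex Metric MeasureTheory

/-!
For `f` holomorphic near the closed disc `closedBall c r`, the mean value property applied to
`f ^ 2` gives `‖f c‖ ^ 2 ≤ circleAverage (‖f ·‖ ^ 2) c r`. Integrating this against `2 π r dr` over
`0 < r < R` and reading the result in polar coordinates yields
`π R ^ 2 ‖f c‖ ^ 2 ≤ ∫_{ball c R} ‖f‖ ^ 2`. For `‖z‖ < a` the disc about `z` of radius `a - ‖z‖`
lies in `ball 0 a`, which gives the bound.
-/

open Real Set

variable {E : Type*} [NormedAddCommGroup E] [NormedSpace ℝ E]

theorem norm_circleAverage_le_circleAverage_norm (f : ℂ → E) (c : ℂ) (R : ℝ) :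
    ‖circleAverage f c R‖ ≤ circleAverage (fun z => ‖f z‖) c R := by
  rw [circleAverage, circleAverage, norm_smul, smul_eq_mul,
    Real.norm_of_nonneg (inv_pos.2 two_pi_pos).le]
  gcongr
  exact intervalIntegral.norm_integral_le_integral_norm two_pi_pos.le

theorem DiffContOnCl.sq_norm_le_circleAverage {f : ℂ → ℂ} {c : ℂ} {R : ℝ}
    (hf : DiffContOnCl ℂ f (ball c |R|)) :
    ‖f c‖ ^ 2 ≤ Real.circleAverage (fun z => ‖f z‖ ^ 2) c R := by
  have hf2 : DiffContOnCl ℂ ((· ^ 2) ∘ f) (ball c |R|) :=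
    (differentiable_pow 2).comp_diffContOnCl hf
  calc ‖f c‖ ^ 2 = ‖Real.circleAverage ((· ^ 2) ∘ f) c R‖ := by
        rw [hf2.circleAverage, Function.comp_apply, norm_pow]
    _ ≤ Real.circleAverage (fun z => ‖f z‖ ^ 2) c R := by
      convert norm_circleAverage_le_circleAverage_norm ((· ^ 2) ∘ f) c R using 3 with z
      rw [Function.comp_apply, norm_pow]

theorem setIntegral_Ioo_circleMap_eq_circleAverage (g : ℂ → E) (c : ℂ) (r : ℝ) :
    ∫ θ in Ioo (-π) π, g (circleMap c r θ) = (2 * π) • circleAverage g c r := by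
  rw [circleAverage_eq_integral_add (-π), smul_inv_smul₀ two_pi_pos.ne',
    intervalIntegral.integral_comp_add_right (fun θ => g (circleMap c r θ)),
    intervalIntegral.integral_of_le (by linarith [pi_pos]), integral_Ioc_eq_integral_Ioo]
  congr 3 <;> ring

theorem Complex.add_polarCoord_symm_eq_circleMap (c : ℂ) (p : ℝ × ℝ) :
    c + Complex.polarCoord.symm p = circleMap c p.1 p.2 := by
  simp [circleMap, exp_mul_I]

theorem Complex.integrableOn_polarCoord_target {g : ℂ → E} (hg : Integrable g) :
    IntegrableOn (fun p : ℝ × ℝ => p.1 • g (Complex.polarCoord.symm p)) polarCoord.target := by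
  have hg' : Integrable (g ∘ measurableEquivRealProd.symm) :=
    (volume_preserving_equiv_real_prod.symm.integrable_comp_emb
      measurableEquivRealProd.symm.measurableEmbedding).2 hg
  have := (integrableOn_image_iff_integrableOn_abs_det_fderiv_smul volume
    polarCoord.open_target.measurableSet
    (fun p _ => (hasFDerivAt_polarCoord_symm p).hasFDerivWithinAt) polarCoord.symm.injOn _).1
    (by rw [polarCoord.symm_image_target_eq_source]; exact hg'.integrableOn)
  refine this.congr_fun (fun p hp => ?_) polarCoord.open_target.measurableSet
  simp only [Function.comp_apply, measurableEquivRealProd_symm_polarCoord_symm_apply,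
    det_fderivPolarCoordSymm, abs_of_pos (show 0 < p.1 from hp.1)]

theorem smul_indicator_ball_add_polarCoord_symm (g : ℂ → E) {c : ℂ} {R : ℝ} {p : ℝ × ℝ}
    (hp : p ∈ polarCoord.target) :
    p.1 • (ball c R).indicator g (c + Complex.polarCoord.symm p) =
      (Ioo 0 R ×ˢ Ioo (-π) π).indicator (fun p => p.1 • g (circleMap c p.1 p.2)) p := by
  have hp₁ : 0 < p.1 := hp.1
  have hmem : c + Complex.polarCoord.symm p ∈ ball c R ↔ p ∈ Ioo 0 R ×ˢ Ioo (-π) π := by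
    simp [mem_ball, abs_of_pos hp₁, hp₁, hp.2]
  by_cases h : p ∈ Ioo 0 R ×ˢ Ioo (-π) π
  · rw [indicator_of_mem (hmem.2 h), indicator_of_mem h, Complex.add_polarCoord_symm_eq_circleMap]
  · rw [indicator_of_notMem (mt hmem.1 h), indicator_of_notMem h, smul_zero]

theorem setIntegral_ball_eq_setIntegral_polar (g : ℂ → E) (c : ℂ) (R : ℝ) :
    ∫ w in ball c R, g w = ∫ p in Ioo 0 R ×ˢ Ioo (-π) π, p.1 • g (circleMap c p.1 p.2) := by
  have hS : Ioo 0 R ×ˢ Ioo (-π) π ⊆ polarCoord.target := fun p hp => ⟨hp.1.1, hp.2⟩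
  calc ∫ w in ball c R, g w = ∫ u, (ball c R).indicator g (c + u) := by
        rw [integral_add_left_eq_self, integral_indicator measurableSet_ball]
    _ = ∫ p in polarCoord.target, p.1 • (ball c R).indicator g (c + Complex.polarCoord.symm p) :=
        (Complex.integral_comp_polarCoord_symm _).symm
    _ = ∫ p in polarCoord.target, (Ioo 0 R ×ˢ Ioo (-π) π).indicator
          (fun p => p.1 • g (circleMap c p.1 p.2)) p :=
        setIntegral_congr_fun polarCoord.open_target.measurableSet
          fun p hp => smul_indicator_ball_add_polarCoord_symm g hp
    _ = _ := by
        rw [setIntegral_indicator (measurableSet_Ioo.prod measurableSet_Ioo), inter_eq_right.2 hS]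

theorem MeasureTheory.IntegrableOn.integrableOn_polar {g : ℂ → E} {c : ℂ} {R : ℝ}
    (hg : IntegrableOn g (ball c R)) :
    IntegrableOn (fun p : ℝ × ℝ => p.1 • g (circleMap c p.1 p.2)) (Ioo 0 R ×ˢ Ioo (-π) π) := by
  have hS : Ioo 0 R ×ˢ Ioo (-π) π ⊆ polarCoord.target := fun p hp => ⟨hp.1.1, hp.2⟩
  have hshift : Integrable fun u => (ball c R).indicator g (c + u) :=
    ((integrable_indicator_iff measurableSet_ball).2 hg).comp_add_left c
  refine ((Complex.integrableOn_polarCoord_target hshift).mono_set hS).congr_fun (fun p hp => ?_)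
    (measurableSet_Ioo.prod measurableSet_Ioo)
  beta_reduce
  rw [smul_indicator_ball_add_polarCoord_symm g (hS hp), indicator_of_mem hp]

theorem MeasureTheory.IntegrableOn.integrableOn_smul_circleAverage {g : ℂ → E} {c : ℂ} {R : ℝ}
    (hg : IntegrableOn g (ball c R)) :
    IntegrableOn (fun r => r • circleAverage g c r) (Ioo 0 R) := by
  have hF := hg.integrableOn_polar
  rw [IntegrableOn, Measure.volume_eq_prod, ← Measure.prod_restrict] at hF
  have := hF.integral_prod_left.smul (2 * π)⁻¹
  refine this.congr (Filter.Eventually.of_forall fun r => ?_)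
  simp only [Pi.smul_apply, integral_smul, setIntegral_Ioo_circleMap_eq_circleAverage]
  rw [smul_comm r, inv_smul_smul₀ two_pi_pos.ne']

theorem setIntegral_ball_eq_integral_smul_circleAverage {g : ℂ → E} {c : ℂ} {R : ℝ}
    (hg : IntegrableOn g (ball c R)) :
    ∫ w in ball c R, g w = (2 * π) • ∫ r in Ioo 0 R, r • circleAverage g c r := by
  have hF := hg.integrableOn_polar
  rw [Measure.volume_eq_prod] at hF
  rw [setIntegral_ball_eq_setIntegral_polar, Measure.volume_eq_prod, setIntegral_prod _ hF,
    ← integral_smul]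
  refine integral_congr_ae (Filter.Eventually.of_forall fun r => ?_)
  simp only [integral_smul, setIntegral_Ioo_circleMap_eq_circleAverage]
  exact smul_comm _ _ _

theorem DifferentiableOn.pi_mul_sq_mul_sq_norm_le_setIntegral_ball {f : ℂ → ℂ} {c : ℂ} {R : ℝ}
    (hR : 0 ≤ R) (hf : DifferentiableOn ℂ f (ball c R))
    (hf2 : IntegrableOn (fun w => ‖f w‖ ^ 2) (ball c R)) :
    π * R ^ 2 * ‖f c‖ ^ 2 ≤ ∫ w in ball c R, ‖f w‖ ^ 2 := by
  have hmean : ∀ r ∈ Ioo 0 R, r * ‖f c‖ ^ 2 ≤ r * circleAverage (fun w => ‖f w‖ ^ 2) c r :=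
    fun r hr => mul_le_mul_of_nonneg_left (DiffContOnCl.sq_norm_le_circleAverage
      (hf.diffContOnCl_ball (by rw [abs_of_pos hr.1]; exact closedBall_subset_ball hr.2))) hr.1.le
  have hlin : IntegrableOn (fun r : ℝ => r * ‖f c‖ ^ 2) (Ioo 0 R) :=
    (continuous_id.mul continuous_const).integrableOn_Icc.mono_set Ioo_subset_Icc_self
  calc π * R ^ 2 * ‖f c‖ ^ 2 = 2 * π * ∫ r in Ioo 0 R, r * ‖f c‖ ^ 2 := by
        rw [integral_mul_const, ← integral_Ioc_eq_integral_Ioo,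
          ← intervalIntegral.integral_of_le hR, integral_id]
        ring
    _ ≤ 2 * π * ∫ r in Ioo 0 R, r * circleAverage (fun w => ‖f w‖ ^ 2) c r :=
        mul_le_mul_of_nonneg_left
          (setIntegral_mono_on hlin hf2.integrableOn_smul_circleAverage measurableSet_Ioo hmean)
          (by positivity)
    _ = ∫ w in ball c R, ‖f w‖ ^ 2 := (setIntegral_ball_eq_integral_smul_circleAverage hf2).symm

theorem norm_le_sqrt_integral_sq_of_lt_general (a : ℝ) (f : ℂ → ℂ)
    (hf : DifferentiableOn ℂ f (ball (0 : ℂ) a))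
    (hf2 : IntegrableOn (fun z => ‖f z‖ ^ 2) (ball (0 : ℂ) a)) :
    ∀ z : ℂ, ‖z‖ < a →
      ‖f z‖ ≤ (Real.sqrt Real.pi * (a - ‖z‖))⁻¹ *
        Real.sqrt (∫ w in ball (0 : ℂ) a, ‖f w‖ ^ 2) := by
  intro z hz
  have hr : 0 < a - ‖z‖ := sub_pos.2 hz
  have hsub : ball z (a - ‖z‖) ⊆ ball 0 a := ball_subset_ball' (by simp)
  have hdisk := (hf.mono hsub).pi_mul_sq_mul_sq_norm_le_setIntegral_ball hr.le (hf2.mono_set hsub)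
  have hmono : ∫ w in ball z (a - ‖z‖), ‖f w‖ ^ 2 ≤ ∫ w in ball 0 a, ‖f w‖ ^ 2 :=
    setIntegral_mono_set hf2 (ae_of_all _ fun _ => by positivity) hsub.eventuallyLE
  rw [inv_mul_eq_div, le_div_iff₀ (by positivity)]
  refine Real.le_sqrt_of_sq_le ?_
  calc (‖f z‖ * (√π * (a - ‖z‖))) ^ 2 = π * (a - ‖z‖) ^ 2 * ‖f z‖ ^ 2 := by
        rw [mul_pow, mul_pow, sq_sqrt pi_pos.le]
        ring
    _ ≤ _ := hdisk.trans hmono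

/-- Interior pointwise bound: for `f` holomorphic on `ball 0 a` with `‖f‖²` integrable,
`‖f(z)‖ ≤ (√π (a - ‖z‖))⁻¹ ‖f‖_{L²(B_a)}` for `‖z‖ < a`. -/
theorem norm_le_sqrt_integral_sq_of_lt (a : ℝ) (ha : 0 < a) (f : ℂ → ℂ)
    (hf : DifferentiableOn ℂ f (ball (0 : ℂ) a))
    (hf2 : IntegrableOn (fun z => ‖f z‖ ^ 2) (ball (0 : ℂ) a)) :
    ∀ z : ℂ, ‖z‖ < a →
      ‖f z‖ ≤ (Real.sqrt Real.pi * (a - ‖z‖))⁻¹ *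
        Real.sqrt (∫ w in ball (0 : ℂ) a, ‖f w‖ ^ 2) :=
  norm_le_sqrt_integral_sq_of_lt_general a f hf hf2
end

section
/- Let a > 0, let f : ℂ → ℂ be complex-differentiable on the open ball B(0,a), and assume that z ↦ ‖f(z)‖² is integrable on B(0,a). Then for every z with ‖z‖ ≤ 2^{−1/3} · a, one has ‖ ∫_{t ∈ [0,1]} f(t·z) · z dt ‖ ≤ ‖f‖_{L²(B_a)}. -/
/-! The square `f ^ 2` is again holomorphic, so by the area mean value property `f w ^ 2` is the
average of `f ^ 2` over any disc `B(w, ρ) ⊆ B(0, a)`; hence `‖f w‖ ≤ ‖f‖_{L²(B_a)} / (√π ρ)`,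
and with `ρ = a - ‖w‖` the integrand of the segment integral is bounded by
`‖f‖_{L²} / √π · ‖z‖ / (a - t‖z‖)`. Integrating gives `‖f‖_{L²} / √π · log (a / (a - ‖z‖))`,
and for `‖z‖ ≤ 2^{-1/3} a ≤ 4a/5` this logarithm is at most `log 5 < √π`. -/

open Complex Metric MeasureTheory
open Set Real Filter

section AreaMeanValue

variable {E : Type*} [NormedAddCommGroup E]

theorem integral_Ioo_circleMap_eq_smul_circleAverage [NormedSpace ℝ E] (g : ℂ → E) (c : ℂ)
    (r : ℝ) : ∫ θ in Ioo (-π) π, g (circleMap c r θ) = (2 * π) • Real.circleAverage g c r := by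
  have hperiodic := ((periodic_circleMap c r).comp g).intervalIntegral_add_eq (-π) 0
  rw [circleAverage_def, smul_inv_smul₀ (by positivity), ← integral_Ioc_eq_integral_Ioo,
    ← intervalIntegral.integral_of_le (by linarith [pi_pos])]
  rwa [show -π + 2 * π = π by ring, zero_add] at hperiodic

theorem integral_ball_eq_integral_circleAverage [NormedSpace ℝ E] {g : ℂ → E} {c : ℂ} {R : ℝ}
    (hg : ContinuousOn g (closedBall c R)) :
    ∫ z in ball c R, g z = ∫ r in Ioo 0 R, (2 * π * r) • Real.circleAverage g c r := by
  set F : ℝ × ℝ → E := fun p => p.1 • g (circleMap c p.1 p.2)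
  have hF : IntegrableOn F (Ioo 0 R ×ˢ Ioo (-π) π) := by
    refine ContinuousOn.integrableOn_compact (isCompact_Icc.prod isCompact_Icc) ?_
      |>.mono_set (prod_mono Ioo_subset_Icc_self Ioo_subset_Icc_self)
    refine continuousOn_fst.smul (hg.comp (by unfold circleMap; fun_prop) ?_)
    rintro ⟨r, θ⟩ ⟨⟨hr0, hrR⟩, -⟩
    simpa [circleMap, abs_of_nonneg hr0] using hrR
  have polar : ∫ z in ball c R, g z = ∫ p in Ioo 0 R ×ˢ Ioo (-π) π, F p := by
    rw [← integral_indicator measurableSet_ball, ← integral_add_left_eq_self _ c,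
      ← Complex.integral_comp_polarCoord_symm,
      show polarCoord.target = Ioi (0 : ℝ) ×ˢ Ioo (-π) π from rfl,
      show Ioo 0 R ×ˢ Ioo (-π) π = Ioi 0 ×ˢ Ioo (-π) π ∩ Iio R ×ˢ univ by
        rw [prod_inter_prod, Ioi_inter_Iio, inter_univ],
      ← setIntegral_indicator (measurableSet_Iio.prod MeasurableSet.univ)]
    refine setIntegral_congr_fun (measurableSet_Ioi.prod measurableSet_Ioo) ?_
    rintro ⟨r, θ⟩ ⟨hr : 0 < r, -⟩
    have hcircle : c + Complex.polarCoord.symm (r, θ) = circleMap c r θ := by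
      simp [circleMap, Complex.exp_mul_I]
    have hmem : circleMap c r θ ∈ ball c R ↔ r < R := by
      rw [mem_ball, dist_eq_norm, circleMap_sub_center, norm_circleMap_zero, abs_of_pos hr]
    simp only [hcircle]
    by_cases hrR : r < R
    · rw [indicator_of_mem (hmem.2 hrR), indicator_of_mem (by simpa using hrR)]
    · rw [indicator_of_notMem (mt hmem.1 hrR), indicator_of_notMem (by simpa using hrR),
        smul_zero]
  rw [polar, Measure.volume_eq_prod, setIntegral_prod F (by rwa [← Measure.volume_eq_prod])]
  refine setIntegral_congr_fun measurableSet_Ioo fun r _ => ?_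
  rw [integral_smul, integral_Ioo_circleMap_eq_smul_circleAverage, smul_smul, mul_comm]

theorem DiffContOnCl.integral_ball_eq_smul [NormedSpace ℂ E] [CompleteSpace E] {g : ℂ → E}
    {c : ℂ} {R : ℝ} (hR : 0 ≤ R) (hg : DiffContOnCl ℂ g (ball c R)) :
    ∫ z in ball c R, g z = (π * R ^ 2) • g c := by
  have hmean : ∀ r ∈ Ioo 0 R, Real.circleAverage g c r = g c := fun r hr =>
    (hg.mono (ball_subset_ball ((abs_of_pos hr.1).trans_le hr.2.le))).circleAverage
  rw [integral_ball_eq_integral_circleAverage hg.continuousOn_ball,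
    setIntegral_congr_fun measurableSet_Ioo fun r hr => by rw [hmean r hr], integral_smul_const,
    ← integral_Ioc_eq_integral_Ioo, ← intervalIntegral.integral_of_le hR,
    intervalIntegral.integral_const_mul, integral_id]
  congr 1
  ring

end AreaMeanValue

section PointEvaluation

variable {f : ℂ → ℂ} {U : Set ℂ} {w : ℂ} {ρ : ℝ}

theorem DifferentiableOn.pi_mul_sq_mul_norm_sq_le_integral (hf : DifferentiableOn ℂ f U)
    (hf2 : IntegrableOn (fun z => ‖f z‖ ^ 2) U) (hρ : 0 < ρ) (hU : ball w ρ ⊆ U) :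
    π * ρ ^ 2 * ‖f w‖ ^ 2 ≤ ∫ z in U, ‖f z‖ ^ 2 := by
  have hsmaller : ∀ ρ' ∈ Ioo 0 ρ, π * ρ' ^ 2 * ‖f w‖ ^ 2 ≤ ∫ z in U, ‖f z‖ ^ 2 := by
    rintro ρ' ⟨hρ'0, hρ'ρ⟩
    have hclosed : closedBall w ρ' ⊆ U := (closedBall_subset_ball hρ'ρ).trans hU
    have hmean := ((hf.fun_pow 2).diffContOnCl_ball hclosed).integral_ball_eq_smul hρ'0.le
    calc π * ρ' ^ 2 * ‖f w‖ ^ 2 = ‖∫ z in ball w ρ', f z ^ 2‖ := by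
          rw [hmean, norm_smul, norm_pow, Real.norm_of_nonneg (by positivity)]
      _ ≤ ∫ z in ball w ρ', ‖f z‖ ^ 2 := by
          simp_rw [← norm_pow]
          exact norm_integral_le_integral_norm _
      _ ≤ ∫ z in U, ‖f z‖ ^ 2 :=
          setIntegral_mono_set hf2 (.of_forall fun z => by positivity)
            (ball_subset_closedBall.trans hclosed).eventuallyLE
  have hcont : Continuous fun ρ' : ℝ => π * ρ' ^ 2 * ‖f w‖ ^ 2 := by fun_prop
  exact le_of_tendsto ((hcont.tendsto ρ).mono_left nhdsWithin_le_nhds)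
    (eventually_of_mem (Ioo_mem_nhdsLT hρ) hsmaller)

theorem DifferentiableOn.norm_le_sqrt_integral_norm_sq_div (hf : DifferentiableOn ℂ f U)
    (hf2 : IntegrableOn (fun z => ‖f z‖ ^ 2) U) (hρ : 0 < ρ) (hU : ball w ρ ⊆ U) :
    ‖f w‖ ≤ √(∫ z in U, ‖f z‖ ^ 2) / (√π * ρ) := by
  rw [le_div_iff₀ (by positivity)]
  refine le_sqrt_of_sq_le ?_
  rw [mul_pow, mul_pow, sq_sqrt pi_pos.le]
  linarith [hf.pi_mul_sq_mul_norm_sq_le_integral hf2 hρ hU]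

end PointEvaluation

theorem integral_div_sub_mul_eq_log {a r : ℝ} (ha : 0 < a) (hra : r < a) :
    ∫ t in (0 : ℝ)..1, r / (a - t * r) = Real.log (a / (a - r)) := by
  rcases eq_or_ne r 0 with rfl | hr
  · simp
  have hzero : (0 : ℝ) ∉ uIcc (a - r * 1) (a - r * 0) :=
    notMem_uIcc_of_lt (by linarith) (by linarith)
  calc ∫ t in (0 : ℝ)..1, r / (a - t * r) = r * ∫ t in (0 : ℝ)..1, (a - r * t)⁻¹ := by
        rw [← intervalIntegral.integral_const_mul]
        simp only [div_eq_mul_inv, mul_comm]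
    _ = Real.log (a / (a - r)) := by
        rw [intervalIntegral.integral_comp_sub_mul (fun x => x⁻¹) hr, integral_inv hzero,
          smul_eq_mul, mul_inv_cancel_left₀ hr]
        simp

theorem norm_integral_segment_le_mul_log {f : ℂ → ℂ} {a K : ℝ} {z : ℂ} (hz : ‖z‖ < a)
    (hf : ∀ w, ‖w‖ < a → ‖f w‖ ≤ K / (a - ‖w‖)) :
    ‖∫ t in (0 : ℝ)..1, f (t * z) * z‖ ≤ K * Real.log (a / (a - ‖z‖)) := by
  have hpos : ∀ t ∈ Icc (0 : ℝ) 1, 0 < a - t * ‖z‖ := fun t ht => by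
    nlinarith [norm_nonneg z, ht.1, ht.2]
  have hbound : ∀ t ∈ Ioc (0 : ℝ) 1, ‖f (t * z) * z‖ ≤ K * (‖z‖ / (a - t * ‖z‖)) := by
    intro t ht
    have hnorm : ‖(t : ℂ) * z‖ = t * ‖z‖ := by
      rw [norm_mul, Complex.norm_real, Real.norm_of_nonneg ht.1.le]
    have hft := hf _ (by rw [hnorm]; linarith [hpos t (Ioc_subset_Icc_self ht)])
    rw [hnorm] at hft
    calc ‖f (t * z) * z‖ = ‖f (t * z)‖ * ‖z‖ := norm_mul _ _
      _ ≤ K / (a - t * ‖z‖) * ‖z‖ := by gcongr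
      _ = K * (‖z‖ / (a - t * ‖z‖)) := by ring
  have hcont : ContinuousOn (fun t : ℝ => K * (‖z‖ / (a - t * ‖z‖))) (uIcc 0 1) := by
    refine continuousOn_const.mul (continuousOn_const.div (by fun_prop) fun t ht => ?_)
    exact (hpos t (by simpa using ht)).ne'
  calc ‖∫ t in (0 : ℝ)..1, f (t * z) * z‖ ≤ ∫ t in (0 : ℝ)..1, K * (‖z‖ / (a - t * ‖z‖)) :=
        intervalIntegral.norm_integral_le_of_norm_le zero_le_one (.of_forall hbound)
          hcont.intervalIntegrable
    _ = K * Real.log (a / (a - ‖z‖)) := by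
        rw [intervalIntegral.integral_const_mul,
          integral_div_sub_mul_eq_log ((norm_nonneg z).trans_lt hz) hz]

theorem two_rpow_neg_one_third_le : (2 : ℝ) ^ (-(1 : ℝ) / 3) ≤ 4 / 5 := by
  refine le_of_pow_le_pow_left₀ three_ne_zero (by norm_num) ?_
  rw [← Real.rpow_natCast, ← Real.rpow_mul zero_le_two]
  norm_num

theorem log_five_lt_sqrt_pi : Real.log 5 < √π := by
  have hsplit : Real.log 5 = 2 * Real.log 2 + Real.log (5 / 4) := by
    rw [← Real.log_rpow zero_lt_two, ← Real.log_mul (by positivity) (by norm_num)]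
    norm_num
  have hquarter : Real.log (5 / 4) ≤ 5 / 4 - 1 := log_le_sub_one_of_pos (by norm_num)
  have hsqrt : (1.7 : ℝ) < √π := (lt_sqrt (by norm_num)).2 (by linarith [pi_gt_three])
  linarith [log_two_lt_d9]

/-- Local form of (eq:int-beta2): for `f` holomorphic on `ball 0 a` with `‖f‖²` integrable,
and `‖z‖ ≤ 2^{-1/3} a`, the segment integral satisfies
`‖∫₀¹ f(tz)·z dt‖ ≤ ‖f‖_{L²(B_a)}`. -/
theorem segment_integral_le_L2 (a : ℝ) (ha : 0 < a) (f : ℂ → ℂ)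
    (hf : DifferentiableOn ℂ f (ball (0 : ℂ) a))
    (hf2 : IntegrableOn (fun z => ‖f z‖ ^ 2) (ball (0 : ℂ) a)) :
    ∀ z : ℂ, ‖z‖ ≤ (2 : ℝ) ^ (-(1 : ℝ) / 3) * a →
      ‖∫ t in (0:ℝ)..1, f ((t : ℂ) * z) * z‖ ≤
        Real.sqrt (∫ w in ball (0 : ℂ) a, ‖f w‖ ^ 2) := by
  intro z hz
  set M := √(∫ w in ball (0 : ℂ) a, ‖f w‖ ^ 2)
  have hz' : ‖z‖ ≤ 4 / 5 * a := hz.trans (by gcongr; exact two_rpow_neg_one_third_le)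
  have hpoint : ∀ w : ℂ, ‖w‖ < a → ‖f w‖ ≤ M / √π / (a - ‖w‖) := fun w hw => by
    rw [div_div]
    exact hf.norm_le_sqrt_integral_norm_sq_div hf2 (sub_pos.2 hw)
      (ball_subset_ball' (by rw [dist_zero_right, sub_add_cancel]))
  calc ‖∫ t in (0:ℝ)..1, f ((t : ℂ) * z) * z‖
      ≤ M / √π * Real.log (a / (a - ‖z‖)) :=
        norm_integral_segment_le_mul_log (by linarith) hpoint
    _ ≤ M / √π * Real.log 5 := by
        gcongr
        · exact div_pos ha (by linarith)
        · rw [div_le_iff₀ (by linarith)]; linarith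
    _ ≤ M / √π * √π := by gcongr; exact log_five_lt_sqrt_pi.le
    _ = M := div_mul_cancel₀ M (by positivity)
end
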